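/- Let A = (Σ, Q, 𝒯, δ) be an alternating selecting tree automaton and t ∈ T(Σ). Define S : dom(t) → 2^Q by S(ε) = 𝒯 and, for every π with t(π) ∈ Σ and i ∈ {1,2}, S(π·i) = {q ∈ Q : there exist q' ∈ S(π) and a transition (q', L, τ, φ) ∈ δ with t(π) ∈ L such that the atom ↓ᵢq occurs in φ}. Define Acc_S : dom(t) → 2^Q by: Acc_S(π) = ∅ if t(π) = #, and otherwise q ∈ Acc_S(π) iff q ∈ S(π) and some transition (q, L, τ, φ) ∈ δ has t(π) ∈ L and φ evaluates to true under the Boolean valuation assigning true to ↓ᵢq' iff q' ∈ Acc_S(π·i). Then Acc_S(π) = Acc(π) ∩ S(π) for every π ∈ dom(t); in particular t ∈ L(A) if and only if 𝒯 ∩ Acc_S(ε) ≠ ∅ (soundness of the on-the-fly top-down approximation). -/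
import Mathlib


/-- Binary trees over an alphabet `σ`: `leaf` is the leaf symbol `#`. -/
inductive BTree (σ : Type) : Type where
  | leaf : BTree σ
  | node : σ → BTree σ → BTree σ → BTree σ

namespace BTree

/-- `mem π t` : the node `π` (a sequence over `{1,2}`, here `Bool` with
`false` = first child, `true` = second child) belongs to `dom t`. -/
def mem {σ : Type} : List Bool → BTree σ → Prop
  | [], _ => True
  | _ :: _, .leaf => False
  | false :: π, .node _ t1 _ => mem π t1
  | true :: π, .node _ _ t2 => mem π t2

/-- The label of `t` at node `π`: `some l` if `t(π) = l ∈ σ`,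
and `none` if `t(π) = #` or `π ∉ dom t`. -/
def labelAt {σ : Type} : BTree σ → List Bool → Option σ
  | .leaf, _ => none
  | .node l _ _, [] => some l
  | .node _ t1 _, false :: π => labelAt t1 π
  | .node _ _ t2, true :: π => labelAt t2 π

end BTree

/-- A selecting tree automaton (STA) over alphabet `σ` with states `Q`:
top states, bottom states, selecting configurations and transitions
`(q, L, q₁, q₂)` with `L ⊆ σ`. -/
structure STA (σ Q : Type) where
  top : Set Q
  bot : Set Q
  sel : Set (Q × σ)
  delta : Set (Q × Set σ × Q × Q)

namespace STA

variable {σ Q : Type}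

/-- Destination states: `δ(q,l) = {(q',q'') | ∃ L, l ∈ L ∧ (q,L,q',q'') ∈ δ}`. -/
def dst (A : STA σ Q) (q : Q) (l : σ) : Set (Q × Q) :=
  {p | ∃ L, l ∈ L ∧ (q, L, p.1, p.2) ∈ A.delta}

/-- Source states: `δ(q₁,q₂,l) = {q | ∃ L, l ∈ L ∧ (q,L,q₁,q₂) ∈ δ}`. -/
def src (A : STA σ Q) (q1 q2 : Q) (l : σ) : Set Q :=
  {q | ∃ L, l ∈ L ∧ (q, L, q1, q2) ∈ A.delta}

/-- `R` is a run of `A` over `t`. -/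
def IsRun (A : STA σ Q) (t : BTree σ) (R : List Bool → Q) : Prop :=
  ∀ π l, t.labelAt π = some l →
    R π ∈ A.src (R (π ++ [false])) (R (π ++ [true])) l

/-- `R` is an accepting run of `A` over `t`. -/
def Accepting (A : STA σ Q) (t : BTree σ) (R : List Bool → Q) : Prop :=
  A.IsRun t R ∧ R [] ∈ A.top ∧
    ∀ π, BTree.mem π t → t.labelAt π = none → R π ∈ A.bot

/-- The language of `A`. -/
def lang (A : STA σ Q) : Set (BTree σ) := {t | ∃ R, A.Accepting t R}

/-- The set of nodes of `t` selected by `A`. -/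
def selected (A : STA σ Q) (t : BTree σ) : Set (List Bool) :=
  {π | ∃ R l, A.Accepting t R ∧ t.labelAt π = some l ∧ (R π, l) ∈ A.sel}

/-- `A` is top-down deterministic. -/
def TDDet (A : STA σ Q) : Prop :=
  (∃ q, A.top = {q}) ∧ ∀ q l, ∃ p, A.dst q l = {p}

/-- `A` is bottom-up deterministic. -/
def BUDet (A : STA σ Q) : Prop :=
  (∃ q, A.bot = {q}) ∧ ∀ q1 q2 l, ∃ q, A.src q1 q2 l = {q}

/-- `A` is top-down complete. -/
def TDComplete (A : STA σ Q) : Prop := ∀ q l, (A.dst q l).Nonempty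

/-- `A` is bottom-up complete. -/
def BUComplete (A : STA σ Q) : Prop := ∀ q1 q2 l, (A.src q1 q2 l).Nonempty

/-- One-step reachability between states. -/
def step (A : STA σ Q) (p p' : Q) : Prop :=
  ∃ L q1 q2, (p, L, q1, q2) ∈ A.delta ∧ (p' = q1 ∨ p' = q2)

/-- Reachability between states. -/
def reach (A : STA σ Q) : Q → Q → Prop := Relation.ReflTransGen A.step

/-- `A[q]` : the restriction of `A` to the state `q`
(top states become `{q}` and everything is restricted to states reachable from `q`). -/
def restrict (A : STA σ Q) (q : Q) : STA σ Q where
  top := {q}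
  bot := {p | p ∈ A.bot ∧ A.reach q p}
  sel := {ps | ps ∈ A.sel ∧ A.reach q ps.1}
  delta := {tr | tr ∈ A.delta ∧ A.reach q tr.1}

/-- A state is non-changing if `δ(q,l) = {(q,q)}` for every label. -/
def NonChanging (A : STA σ Q) (q : Q) : Prop := ∀ l, A.dst q l = {(q, q)}

/-- Top-down universal state. -/
def TDUniversal (A : STA σ Q) (q : Q) : Prop := A.NonChanging q ∧ q ∈ A.bot

/-- Top-down sink state. -/
def TDSink (A : STA σ Q) (q : Q) : Prop := A.NonChanging q ∧ q ∉ A.bot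

end STA

/-- Equivalence of STAs: same language and same selected nodes on every tree. -/
def STAEquiv {σ Q Q' : Type} (A : STA σ Q) (B : STA σ Q') : Prop :=
  A.lang = B.lang ∧ ∀ t, A.selected t = B.selected t

/-- `A` is a minimal top-down complete TDSTA: no equivalent top-down complete
TDSTA has strictly fewer states. -/
def MinimalTD {σ Q : Type} (A : STA σ Q) : Prop :=
  A.TDDet ∧ A.TDComplete ∧
    ∀ (Q' : Type) [Finite Q'], ∀ B : STA σ Q',
      B.TDDet → B.TDComplete → STAEquiv B A → Nat.card Q ≤ Nat.card Q'

/-- `A` is a minimal bottom-up complete BDSTA. -/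
def MinimalBU {σ Q : Type} (A : STA σ Q) : Prop :=
  A.BUDet ∧ A.BUComplete ∧
    ∀ (Q' : Type) [Finite Q'], ∀ B : STA σ Q',
      B.BUDet → B.BUComplete → STAEquiv B A → Nat.card Q ≤ Nat.card Q'

/-- `B` behaves like `A_⊤`: it accepts every tree and selects no node. -/
def IsTopSTA {σ Q : Type} (B : STA σ Q) : Prop :=
  B.lang = Set.univ ∧ ∀ t, B.selected t = ∅

/-- Boolean formulas over states: `⊤, ⊥, ∨, ∧, ¬, ↓₁q, ↓₂q`. -/
inductive Form (Q : Type) : Type where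
  | tt : Form Q
  | ff : Form Q
  | orF : Form Q → Form Q → Form Q
  | andF : Form Q → Form Q → Form Q
  | notF : Form Q → Form Q
  | down1 : Q → Form Q
  | down2 : Q → Form Q

/-- Evaluation of a formula under a Boolean valuation of the atoms
`↓₁q'` (given by `v1`) and `↓₂q'` (given by `v2`). -/
def Form.eval {Q : Type} (v1 v2 : Q → Prop) : Form Q → Prop
  | .tt => True
  | .ff => False
  | .orF φ ψ => φ.eval v1 v2 ∨ ψ.eval v1 v2
  | .andF φ ψ => φ.eval v1 v2 ∧ ψ.eval v1 v2
  | .notF φ => ¬ φ.eval v1 v2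
  | .down1 q => v1 q
  | .down2 q => v2 q

/-- The atom `↓ᵢq` (with `i` encoded by `b : Bool`, `false` = 1, `true` = 2)
occurs in the formula. -/
def Form.occurs {Q : Type} (b : Bool) (q : Q) : Form Q → Prop
  | .tt => False
  | .ff => False
  | .orF φ ψ => φ.occurs b q ∨ ψ.occurs b q
  | .andF φ ψ => φ.occurs b q ∨ ψ.occurs b q
  | .notF φ => φ.occurs b q
  | .down1 q' => b = false ∧ q' = q
  | .down2 q' => b = true ∧ q' = q

/-- An alternating selecting tree automaton (ASTA): transitions are
`(q, L, τ, φ)` with `τ ∈ {→, ⇒}` (encoded by `Bool`) and `φ` a formula. -/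
structure ASTA (σ Q : Type) where
  top : Set Q
  delta : Set (Q × Set σ × Bool × Form Q)

namespace ASTA

variable {σ Q : Type}

/-- `Acc` on subtrees: the states accepting the subtree. -/
def AccT (A : ASTA σ Q) : BTree σ → Set Q
  | .leaf => ∅
  | .node l t1 t2 =>
    {q | ∃ L τ φ, (q, L, τ, φ) ∈ A.delta ∧ l ∈ L ∧
      Form.eval (· ∈ A.AccT t1) (· ∈ A.AccT t2) φ}

/-- `Acc(π)` for a node `π` of `t` (`∅` outside of `dom t`). -/
def AccAt (A : ASTA σ Q) : BTree σ → List Bool → Set Q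
  | s, [] => A.AccT s
  | .leaf, _ :: _ => ∅
  | .node _ t1 _, false :: π => A.AccAt t1 π
  | .node _ _ t2, true :: π => A.AccAt t2 π

/-- The language of an ASTA. -/
def lang (A : ASTA σ Q) : Set (BTree σ) := {t | (A.top ∩ A.AccT t).Nonempty}

/-- The top-down step of the on-the-fly approximation: the states propagated
to the `b`-child of a node labeled `l` whose own state set is `S0`. -/
def childS (A : ASTA σ Q) (l : σ) (b : Bool) (S0 : Set Q) : Set Q :=
  {q | ∃ q' ∈ S0, ∃ L τ φ, (q', L, τ, φ) ∈ A.delta ∧ l ∈ L ∧ Form.occurs b q φ}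

/-- `S(π)` : the top-down approximation set at node `π`, starting from `S0`
at the root (`∅` outside of `dom t`). -/
def Sset (A : ASTA σ Q) : BTree σ → Set Q → List Bool → Set Q
  | _, S0, [] => S0
  | .leaf, _, _ :: _ => ∅
  | .node l t1 _, S0, false :: π => A.Sset t1 (A.childS l false S0) π
  | .node l _ t2, S0, true :: π => A.Sset t2 (A.childS l true S0) π

/-- `Acc_S` on subtrees: states of the restricted (approximated) bottom-up
evaluation, given the top-down set `S0` at the root of the subtree. -/
def AccS (A : ASTA σ Q) : BTree σ → Set Q → Set Q
  | .leaf, _ => ∅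
  | .node l t1 t2, S0 =>
    {q | q ∈ S0 ∧ ∃ L τ φ, (q, L, τ, φ) ∈ A.delta ∧ l ∈ L ∧
      Form.eval (· ∈ A.AccS t1 (A.childS l false S0))
                (· ∈ A.AccS t2 (A.childS l true S0)) φ}

/-- `Acc_S(π)` for a node `π` of `t`, starting from `S0` at the root. -/
def AccSAt (A : ASTA σ Q) : BTree σ → Set Q → List Bool → Set Q
  | s, S0, [] => A.AccS s S0
  | .leaf, _, _ :: _ => ∅
  | .node l t1 _, S0, false :: π => A.AccSAt t1 (A.childS l false S0) π
  | .node l _ t2, S0, true :: π => A.AccSAt t2 (A.childS l true S0) π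

end ASTA


lemma eval_congr_occurs {Q : Type} {v1 v2 w1 w2 : Q → Prop} (φ : Form Q)
    (h1 : ∀ q, φ.occurs false q → (v1 q ↔ w1 q))
    (h2 : ∀ q, φ.occurs true q → (v2 q ↔ w2 q)) :
    φ.eval v1 v2 ↔ φ.eval w1 w2 := by
  induction φ with
  | tt => rfl
  | ff => rfl
  | orF φ ψ ihφ ihψ =>
    simp only [Form.eval]
    rw [ihφ (fun q h => h1 q (Or.inl h)) (fun q h => h2 q (Or.inl h)),
        ihψ (fun q h => h1 q (Or.inr h)) (fun q h => h2 q (Or.inr h))]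
  | andF φ ψ ihφ ihψ =>
    simp only [Form.eval]
    rw [ihφ (fun q h => h1 q (Or.inl h)) (fun q h => h2 q (Or.inl h)),
        ihψ (fun q h => h1 q (Or.inr h)) (fun q h => h2 q (Or.inr h))]
  | notF φ ih =>
    simp only [Form.eval]
    rw [ih h1 h2]
  | down1 q => exact h1 q ⟨rfl, rfl⟩
  | down2 q => exact h2 q ⟨rfl, rfl⟩

lemma accS_eq {σ Q : Type} (A : ASTA σ Q) :
    ∀ (t : BTree σ) (S0 : Set Q), A.AccS t S0 = A.AccT t ∩ S0 := by
  intro t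
  induction t with
  | leaf => intro S0; simp [ASTA.AccS, ASTA.AccT]
  | node l t1 t2 ih1 ih2 =>
    intro S0
    ext q
    simp only [ASTA.AccS, ASTA.AccT, Set.mem_setOf_eq, Set.mem_inter_iff]
    constructor
    · rintro ⟨hq, L, τ, φ, hδ, hl, hev⟩
      refine ⟨⟨L, τ, φ, hδ, hl, ?_⟩, hq⟩
      rw [← eval_congr_occurs φ (v1 := (· ∈ A.AccS t1 (A.childS l false S0)))
        (v2 := (· ∈ A.AccS t2 (A.childS l true S0)))]
      · exact hev
      · intro q' hocc
        rw [ih1]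
        simp only [Set.mem_inter_iff, and_iff_left_iff_imp]
        intro _
        exact ⟨q, hq, L, τ, φ, hδ, hl, hocc⟩
      · intro q' hocc
        rw [ih2]
        simp only [Set.mem_inter_iff, and_iff_left_iff_imp]
        intro _
        exact ⟨q, hq, L, τ, φ, hδ, hl, hocc⟩
    · rintro ⟨⟨L, τ, φ, hδ, hl, hev⟩, hq⟩
      refine ⟨hq, L, τ, φ, hδ, hl, ?_⟩
      rw [eval_congr_occurs φ (w1 := (· ∈ A.AccT t1)) (w2 := (· ∈ A.AccT t2))]
      · exact hev
      · intro q' hocc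
        rw [ih1]
        simp only [Set.mem_inter_iff, and_iff_left_iff_imp]
        intro _
        exact ⟨q, hq, L, τ, φ, hδ, hl, hocc⟩
      · intro q' hocc
        rw [ih2]
        simp only [Set.mem_inter_iff, and_iff_left_iff_imp]
        intro _
        exact ⟨q, hq, L, τ, φ, hδ, hl, hocc⟩

lemma accSAt_eq {σ Q : Type} (A : ASTA σ Q) :
    ∀ (π : List Bool) (t : BTree σ) (S0 : Set Q),
      A.AccSAt t S0 π = A.AccAt t π ∩ A.Sset t S0 π := by
  intro π
  induction π with
  | nil => intro t S0; simpa [ASTA.AccSAt, ASTA.AccAt, ASTA.Sset] using accS_eq A t S0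
  | cons b π ih =>
    intro t S0
    cases t with
    | leaf => simp [ASTA.AccSAt, ASTA.AccAt, ASTA.Sset]
    | node l t1 t2 =>
      cases b <;> simp [ASTA.AccSAt, ASTA.AccAt, ASTA.Sset, ih]

/-- soundness of the on-the-fly top-down approximation:
`Acc_S(π) = Acc(π) ∩ S(π)` at every node, and in particular `t ∈ L(A)` iff
`𝒯 ∩ Acc_S(ε) ≠ ∅`. -/
theorem stmt17 {σ Q : Type} [Finite σ] [Finite Q] (A : ASTA σ Q)
    (t : BTree σ) :
    (∀ π, BTree.mem π t →
      A.AccSAt t A.top π = A.AccAt t π ∩ A.Sset t A.top π) ∧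
    (t ∈ A.lang ↔ (A.top ∩ A.AccSAt t A.top []).Nonempty) := by
  constructor
  · intro π _
    exact accSAt_eq A π t A.top
  · have h := accSAt_eq A [] t A.top
    simp only [ASTA.Sset, ASTA.AccAt] at h
    rw [ASTA.lang, Set.mem_setOf_eq, h]
    constructor
    · rintro ⟨q, hq, hacc⟩; exact ⟨q, hq, hacc, hq⟩
    · rintro ⟨q, hq, hacc, _⟩; exact ⟨q, hq, hacc⟩
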